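/- There is no 2-2-2-2-2 configuration under the Modified CFLS coloring φ containing a rainbow 5-cycle together with at least one matching color class; that is, there do not exist five distinct vertices a, b, c, d, e ∈ V forming a 2-2-2-2-2 configuration in which the five edges ab, bc, cd, de, ea receive pairwise distinct colors and some color class consists of two vertex-disjoint edges. -/

import Mathlib

/-!
The colour of an edge `xy` records, for every block `k`, the bit position `i_k` at which `x^(k)`
and `y^(k)` first differ, and the unordered pair `{x^(i), y^(i)}` at the first block `i` where
`x` and `y` differ. Counting shows that each colour of the rainbow cycle `abcde` reappears on
exactly one chord, so a matching class pairs a cycle edge with its opposite chord, say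
`φ(ab) = φ(ce)`. In the block `k` where `a` and `b` first differ, `c` and `e` then carry the
blocks of `a` and `b` in some order. Comparing `i_k`, the chords `ac` and `eb` cannot share a
colour with `bc` or `ea`, and `ce` is taken by `ab`; so `bd` and `da` carry the colours of `bc`
and `ea`. Either three blocks then first differ pairwise at the same bit, which is impossible, or
the `k`-th blocks of `a`, `b` and `d` coincide.
-/
namespace CFLS

/-- A vertex of `K_n` for `n = 2^(m^2)`: `m` blocks, each a string of `m` bits.
`x k` is the `k`-th block `x^(k+1)`, and `x k j` is its `j`-th bit (most significant first). -/
abbrev Vtx (m : ℕ) := Fin m → Fin m → Bool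

/-- The `j`-th bit of a bit string (as a total function of `j : ℕ`). -/
def bitAt {N : ℕ} (f : Fin N → Bool) (j : ℕ) : Bool :=
  if h : j < N then f ⟨j, h⟩ else false

/-- The value of a bit string read as a binary integer, most significant bit first. -/
def strToNat {N : ℕ} (f : Fin N → Bool) : ℕ :=
  ∑ j : Fin N, if f j then 2 ^ (N - 1 - j.val) else 0

/-- The `k`-th block of a vertex (as a total function of `k : ℕ`). -/
def blockAt {m : ℕ} (x : Vtx m) (k : ℕ) : Fin m → Bool :=
  if h : k < m then x ⟨k, h⟩ else fun _ => false

/-- The least block index at which `x` and `y` differ. -/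
noncomputable def firstDiffBlock {m : ℕ} (x y : Vtx m) : ℕ :=
  sInf {k | blockAt x k ≠ blockAt y k}

/-- The position (1-indexed) of the first bit at which two bit strings differ; `0` if equal. -/
noncomputable def firstDiffIdx {N : ℕ} (f g : Fin N → Bool) : ℕ :=
  if f = g then 0 else sInf {j | bitAt f j ≠ bitAt g j} + 1

/-- The value of a vertex read as a binary integer (concatenation of its blocks). -/
def vtxToNat {m : ℕ} (x : Vtx m) : ℕ :=
  ∑ k : Fin m, strToNat (x k) * (2 ^ m) ^ (m - 1 - k.val)

/-- The colors of the Modified CFLS coloring: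
`((i, {x^(i), y^(i)}), i_1, …, i_m, δ_1, …, δ_m)`. -/
abbrev Color (m : ℕ) := (ℕ × Set (Fin m → Bool)) × (Fin m → ℕ) × (Fin m → ℤ)

/-- The Modified CFLS color of the edge `xy` assuming `x ≤ y` as binary integers. -/
noncomputable def phiAux {m : ℕ} (x y : Vtx m) : Color m :=
  ((firstDiffBlock x y,
      {blockAt x (firstDiffBlock x y), blockAt y (firstDiffBlock x y)}),
   fun k => firstDiffIdx (x k) (y k),
   fun k => if strToNat (x k) ≤ strToNat (y k) then (1 : ℤ) else -1)

/-- The Modified CFLS coloring `φ`. -/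
noncomputable def phi {m : ℕ} (x y : Vtx m) : Color m :=
  if vtxToNat x ≤ vtxToNat y then phiAux x y else phiAux y x

/-- The ten edges among five vertices. -/
def edgeList {m : ℕ} (a b c d e : Vtx m) : List (Vtx m × Vtx m) :=
  [(a,b),(a,c),(a,d),(a,e),(b,c),(b,d),(b,e),(c,d),(c,e),(d,e)]

/-- The number of the ten edges among `a,b,c,d,e` receiving color `col` under `φ`. -/
noncomputable def colorCount {m : ℕ} (a b c d e : Vtx m) (col : Color m) : ℕ :=
  ((edgeList a b c d e).map fun p => phi p.1 p.2).countP fun x =>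
    @decide (x = col) (Classical.propDecidable _)

/-- Five pairwise distinct vertices. -/
def Distinct5 {m : ℕ} (a b c d e : Vtx m) : Prop :=
  a ≠ b ∧ a ≠ c ∧ a ≠ d ∧ a ≠ e ∧ b ≠ c ∧ b ≠ d ∧ b ≠ e ∧ c ≠ d ∧ c ≠ e ∧ d ≠ e

/-- `col` appears on some edge among `a,b,c,d,e`. -/
noncomputable def IsAttained {m : ℕ} (a b c d e : Vtx m) (col : Color m) : Prop :=
  colorCount a b c d e col ≠ 0

/-- A 2-2-2-2-2 configuration: five distinct vertices such that `φ` on the ten edges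
among them takes exactly five values, each attained on exactly two edges. -/
def IsConfig22222 {m : ℕ} (a b c d e : Vtx m) : Prop :=
  Distinct5 a b c d e ∧
  ∀ col : Color m, colorCount a b c d e col = 0 ∨ colorCount a b c d e col = 2

/-- The color class of `col` is a matching: two vertex-disjoint edges of color `col`. -/
def IsMatchingClass {m : ℕ} (a b c d e : Vtx m) (col : Color m) : Prop :=
  ∃ p ∈ edgeList a b c d e, ∃ q ∈ edgeList a b c d e,
    phi p.1 p.2 = col ∧ phi q.1 q.2 = col ∧
    p.1 ≠ q.1 ∧ p.1 ≠ q.2 ∧ p.2 ≠ q.1 ∧ p.2 ≠ q.2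

/-- The color class of `col` is a path: two distinct edges of color `col` sharing a vertex. -/
def IsPathClass {m : ℕ} (a b c d e : Vtx m) (col : Color m) : Prop :=
  ∃ p ∈ edgeList a b c d e, ∃ q ∈ edgeList a b c d e,
    p ≠ q ∧ phi p.1 p.2 = col ∧ phi q.1 q.2 = col ∧
    (p.1 = q.1 ∨ p.1 = q.2 ∨ p.2 = q.1 ∨ p.2 = q.2)

section BigEndian

variable {n B : ℕ}

theorem sum_mul_pow_rev_eq (g : Fin n → Fin B) :
    ∑ j, (g j : ℕ) * B ^ (n - 1 - j) = finFunctionFinEquiv (g ∘ Fin.rev) := by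
  rw [finFunctionFinEquiv_apply, ← Equiv.sum_comp Fin.revPerm]
  refine Fintype.sum_congr _ _ fun j => ?_
  simp only [Fin.revPerm_apply, Fin.val_rev, Function.comp_apply]
  congr 2
  omega

theorem injective_sum_mul_pow_rev :
    Function.Injective fun g : Fin n → Fin B => ∑ j, (g j : ℕ) * B ^ (n - 1 - j) := by
  intro g h hgh
  simp only [sum_mul_pow_rev_eq, Fin.val_inj, finFunctionFinEquiv.injective.eq_iff] at hgh
  exact (Fin.rev_surjective.injective_comp_right).eq_iff.1 hgh

theorem sum_mul_pow_rev_lt (g : Fin n → Fin B) :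
    ∑ j, (g j : ℕ) * B ^ (n - 1 - j) < B ^ n := by
  rw [sum_mul_pow_rev_eq]
  exact Fin.is_lt _

end BigEndian

section Strings

variable {N : ℕ}

theorem strToNat_eq_sum (f : Fin N → Bool) :
    strToNat f = ∑ j, ((if f j then 1 else 0 : Fin 2) : ℕ) * 2 ^ (N - 1 - j) := by
  unfold strToNat
  congr! 1 with j
  cases f j <;> simp

theorem strToNat_lt (f : Fin N → Bool) : strToNat f < 2 ^ N := by
  rw [strToNat_eq_sum]
  exact sum_mul_pow_rev_lt _

theorem strToNat_injective : Function.Injective (strToNat : (Fin N → Bool) → ℕ) := by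
  intro f g hfg
  simp only [strToNat_eq_sum] at hfg
  funext j
  have := congrFun (injective_sum_mul_pow_rev hfg) j
  cases hf : f j <;> cases hg : g j <;> simp_all

end Strings

theorem vtxToNat_injective {m : ℕ} : Function.Injective (vtxToNat : Vtx m → ℕ) := by
  intro x y hxy
  have hdigits : ∀ z : Vtx m, vtxToNat z =
      ∑ k, ((⟨strToNat (z k), strToNat_lt _⟩ : Fin (2 ^ m)) : ℕ) * (2 ^ m) ^ (m - 1 - k) :=
    fun _ => rfl
  rw [hdigits, hdigits] at hxy
  funext k
  exact strToNat_injective (congrArg Fin.val (congrFun (injective_sum_mul_pow_rev hxy) k))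

theorem phi_comm {m : ℕ} {x y : Vtx m} (hxy : x ≠ y) : phi x y = phi y x := by
  have hne : vtxToNat x ≠ vtxToNat y := vtxToNat_injective.ne hxy
  unfold phi
  split_ifs <;> first | rfl | omega

section FirstDiff

variable {N : ℕ}

theorem firstDiffIdx_comm (f g : Fin N → Bool) : firstDiffIdx f g = firstDiffIdx g f := by
  simp only [firstDiffIdx, eq_comm (a := f), ne_comm (a := bitAt f _)]

@[simp]
theorem firstDiffIdx_eq_zero {f g : Fin N → Bool} : firstDiffIdx f g = 0 ↔ f = g := by
  unfold firstDiffIdx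
  split_ifs <;> simp_all

@[simp]
theorem firstDiffIdx_self (f : Fin N → Bool) : firstDiffIdx f f = 0 :=
  firstDiffIdx_eq_zero.2 rfl

theorem bitAt_ne_of_firstDiffIdx_eq {f g : Fin N → Bool} {j : ℕ}
    (h : firstDiffIdx f g = j + 1) : bitAt f j ≠ bitAt g j := by
  unfold firstDiffIdx at h
  split_ifs at h with hfg
  obtain ⟨i, hi⟩ := Function.ne_iff.1 hfg
  have hmem : (i : ℕ) ∈ {j | bitAt f j ≠ bitAt g j} := by simpa [bitAt] using hi
  simpa [Nat.succ_injective h] using Nat.sInf_mem ⟨_, hmem⟩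

/-- Otherwise `f`, `g`, `h` would carry three distinct bits at one position. -/
theorem firstDiffIdx_ne_of_firstDiffIdx_eq {f g h : Fin N → Bool} (hfg : firstDiffIdx f g ≠ 0)
    (hfh : firstDiffIdx f h = firstDiffIdx f g) : firstDiffIdx g h ≠ firstDiffIdx f g := by
  intro hgh
  obtain ⟨j, hj⟩ := Nat.exists_eq_succ_of_ne_zero hfg
  have h₁ := bitAt_ne_of_firstDiffIdx_eq hj
  have h₂ := bitAt_ne_of_firstDiffIdx_eq (hfh.trans hj)
  have h₃ := bitAt_ne_of_firstDiffIdx_eq (hgh.trans hj)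
  revert h₁ h₂ h₃
  generalize bitAt f j = p, bitAt g j = q, bitAt h j = r
  decide +revert

end FirstDiff

section Blocks

variable {m : ℕ}

theorem blockAt_val (x : Vtx m) (k : Fin m) : blockAt x k = x k := dif_pos k.isLt

theorem firstDiffBlock_comm (x y : Vtx m) : firstDiffBlock x y = firstDiffBlock y x := by
  simp only [firstDiffBlock, ne_comm (a := blockAt x _)]

theorem exists_firstDiffBlock_eq {x y : Vtx m} (hxy : x ≠ y) :
    ∃ k : Fin m, (k : ℕ) = firstDiffBlock x y ∧ x k ≠ y k := by
  obtain ⟨i, hi⟩ := Function.ne_iff.1 hxy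
  have hmem : (i : ℕ) ∈ {k | blockAt x k ≠ blockAt y k} := by simpa [blockAt_val] using hi
  have hne : blockAt x (firstDiffBlock x y) ≠ blockAt y (firstDiffBlock x y) :=
    Nat.sInf_mem ⟨_, hmem⟩
  -- past the last block both `blockAt`s are the constant string
  have hlt : firstDiffBlock x y < m := by
    by_contra hge
    simp [blockAt, hge] at hne
  exact ⟨⟨_, hlt⟩, rfl, by rwa [← blockAt_val x, ← blockAt_val y]⟩

theorem phi_fst (x y : Vtx m) :
    (phi x y).1 = (firstDiffBlock x y,
      {blockAt x (firstDiffBlock x y), blockAt y (firstDiffBlock x y)}) := by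
  unfold phi phiAux
  split_ifs
  · rfl
  · simp only [firstDiffBlock_comm y x, Set.pair_comm]

theorem phi_idx (x y : Vtx m) (k : Fin m) : (phi x y).2.1 k = firstDiffIdx (x k) (y k) := by
  unfold phi phiAux
  split_ifs
  · rfl
  · exact firstDiffIdx_comm _ _

theorem exists_block_pair_eq_of_phi_eq {x y z w : Vtx m} (hxy : x ≠ y)
    (h : phi x y = phi z w) : ∃ k : Fin m, x k ≠ y k ∧ ({x k, y k} : Set _) = {z k, w k} := by
  obtain ⟨k, hk, hne⟩ := exists_firstDiffBlock_eq hxy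
  have h₁ := congrArg Prod.fst h
  rw [phi_fst, phi_fst, Prod.mk.injEq] at h₁
  obtain ⟨hI, hpair⟩ := h₁
  rw [← hI, ← hk] at hpair
  simp only [blockAt_val] at hpair
  exact ⟨k, hne, hpair⟩

end Blocks

section PairEq

variable {N : ℕ} {A B C D E : Fin N → Bool}

theorem firstDiffIdx_eq_of_pair_eq (h : ({A, B} : Set _) = {C, E}) :
    firstDiffIdx E A = firstDiffIdx B C := by
  rcases Set.pair_eq_pair_iff.1 h with ⟨rfl, rfl⟩ | ⟨rfl, rfl⟩ <;> simp [firstDiffIdx_comm]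

theorem firstDiffIdx_ne_of_pair_eq_left (hAB : A ≠ B) (h : ({A, B} : Set _) = {C, E}) :
    firstDiffIdx A C ≠ firstDiffIdx B C := by
  rcases Set.pair_eq_pair_iff.1 h with ⟨rfl, rfl⟩ | ⟨rfl, rfl⟩ <;>
    simp [eq_comm (a := 0), hAB, hAB.symm]

theorem firstDiffIdx_ne_of_pair_eq_right (hAB : A ≠ B) (h : ({A, B} : Set _) = {C, E}) :
    firstDiffIdx E B ≠ firstDiffIdx B C := by
  rcases Set.pair_eq_pair_iff.1 h with ⟨rfl, rfl⟩ | ⟨rfl, rfl⟩ <;>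
    simp [eq_comm (a := 0), hAB, hAB.symm]

theorem firstDiffIdx_ne_of_pair_eq_of_eq (hAB : A ≠ B) (h : ({A, B} : Set _) = {C, E})
    (hD : firstDiffIdx B D = firstDiffIdx B C) : firstDiffIdx D A ≠ firstDiffIdx B C := by
  rcases Set.pair_eq_pair_iff.1 h with ⟨rfl, rfl⟩ | ⟨rfl, rfl⟩
  · rw [firstDiffIdx_comm D]
    exact firstDiffIdx_ne_of_firstDiffIdx_eq (by simpa using hAB.symm) hD
  · simp only [firstDiffIdx_self, firstDiffIdx_eq_zero] at hD
    subst hD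
    simpa using hAB.symm

end PairEq

section Pentagon

variable {m : ℕ} {a b c d e : Vtx m}

noncomputable def cycleColors (a b c d e : Vtx m) : List (Color m) :=
  [phi a b, phi b c, phi c d, phi d e, phi e a]

/-- Listed so that rotating `a b c d e` rotates this list together with `cycleColors`. -/
noncomputable def chordColors (a b c d e : Vtx m) : List (Color m) :=
  [phi a c, phi b d, phi c e, phi d a, phi e b]

def IsRainbowPentagon (a b c d e : Vtx m) : Prop :=
  (cycleColors a b c d e).Nodup ∧ (chordColors a b c d e).Perm (cycleColors a b c d e)

theorem IsRainbowPentagon.rotate (h : IsRainbowPentagon a b c d e) :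
    IsRainbowPentagon b c d e a :=
  ⟨(List.nodup_rotate (n := 1)).2 h.1, ((chordColors a b c d e).rotate_perm 1).trans
    (h.2.trans ((cycleColors a b c d e).rotate_perm 1).symm)⟩

theorem IsRainbowPentagon.phi_ne_opposite (h : IsRainbowPentagon a b c d e) (hab : a ≠ b) :
    phi a b ≠ phi c e := by
  intro hce
  obtain ⟨k, hk, hpair⟩ := exists_block_pair_eq_of_phi_eq hab hce
  obtain ⟨hcyc, hperm⟩ := h
  simp only [cycleColors, List.nodup_cons, List.mem_cons, List.not_mem_nil, or_false, not_or]
    at hcyc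
  obtain ⟨⟨hab_bc, -, -, hab_ea⟩, ⟨-, -, hbc_ea⟩, -⟩ := hcyc
  set s := firstDiffIdx (b k) (c k)
  have hbc : (phi b c).2.1 k = s := phi_idx _ _ _
  have hea : (phi e a).2.1 k = s := (phi_idx _ _ _).trans (firstDiffIdx_eq_of_pair_eq hpair)
  -- a chord sharing its colour with `bc` or `ea` is neither `ac`, `eb` (wrong `i_k`) nor `ce`
  have hchord : ∀ col ∈ cycleColors a b c d e, col.2.1 k = s → col ≠ phi c e →
      col = phi b d ∨ col = phi d a := by
    intro col hcol hcol_s hcol_ce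
    have hmem := hperm.mem_iff.2 hcol
    simp only [chordColors, List.mem_cons, List.not_mem_nil, or_false] at hmem
    rcases hmem with rfl | rfl | rfl | rfl | rfl
    · exact absurd hcol_s (by rw [phi_idx]; exact firstDiffIdx_ne_of_pair_eq_left hk hpair)
    · exact Or.inl rfl
    · exact absurd rfl hcol_ce
    · exact Or.inr rfl
    · exact absurd hcol_s (by rw [phi_idx]; exact firstDiffIdx_ne_of_pair_eq_right hk hpair)
  have hbd_da : (phi b d).2.1 k = s ∧ (phi d a).2.1 k = s := by
    rcases hchord _ (by simp [cycleColors]) hbc (hce ▸ Ne.symm hab_bc) with h₁ | h₁ <;>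
      rcases hchord _ (by simp [cycleColors]) hea (hce ▸ Ne.symm hab_ea) with h₂ | h₂
    · exact absurd (h₁.trans h₂.symm) hbc_ea
    · exact ⟨h₁ ▸ hbc, h₂ ▸ hea⟩
    · exact ⟨h₂ ▸ hea, h₁ ▸ hbc⟩
    · exact absurd (h₁.trans h₂.symm) hbc_ea
  simp only [phi_idx] at hbd_da
  exact firstDiffIdx_ne_of_pair_eq_of_eq hk hpair hbd_da.1 hbd_da.2

end Pentagon

section Counting

variable {m : ℕ} {a b c d e : Vtx m}

/-- Each cycle colour occurs twice on the ten edges but only once on the cycle, so once among the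
chords; five distinct colours on five chords leave no room for anything else. -/
theorem IsConfig22222.isRainbowPentagon (hcfg : IsConfig22222 a b c d e)
    (hcyc : (cycleColors a b c d e).Nodup) : IsRainbowPentagon a b c d e := by
  classical
  obtain ⟨⟨-, -, had, hae, -, -, hbe, -, -, -⟩, htwo⟩ := hcfg
  have hcount : ∀ col, colorCount a b c d e col =
      (cycleColors a b c d e).count col + (chordColors a b c d e).count col := by
    intro col
    simp only [colorCount, edgeList, cycleColors, chordColors, List.map_cons, List.map_nil,
      phi_comm had, phi_comm hae, phi_comm hbe, List.countP_cons, List.countP_nil, List.count_cons,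
      List.count_nil, beq_iff_eq, decide_eq_true_eq]
    omega
  refine ⟨hcyc, ((hcyc.subperm (l₂ := chordColors a b c d e) fun col hcol => ?_)
    |>.perm_of_length_le le_rfl).symm⟩
  have hone := List.count_eq_one_of_mem hcyc hcol
  rw [← List.count_pos_iff]
  rcases htwo col with h | h <;> rw [hcount, hone] at h <;> omega

end Counting

section Matching

variable {m : ℕ} {a b c d e : Vtx m}

theorem IsRainbowPentagon.not_isMatchingClass (h : IsRainbowPentagon a b c d e)
    (hdist : Distinct5 a b c d e) (col : Color m) : ¬ IsMatchingClass a b c d e col := by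
  obtain ⟨hab, -, had, hae, hbc, -, hbe, hcd, -, hde⟩ := hdist
  -- a disjoint pair of edges is two cycle edges, two chords, or a cycle edge and its opposite chord
  have hopp₁ := h.phi_ne_opposite hab
  have hopp₂ := h.rotate.phi_ne_opposite hbc
  have hopp₃ := h.rotate.rotate.phi_ne_opposite hcd
  have hopp₄ := h.rotate.rotate.rotate.phi_ne_opposite hde
  have hopp₅ := h.rotate.rotate.rotate.rotate.phi_ne_opposite hae.symm
  obtain ⟨hcyc, hperm⟩ := h
  have hchord := hperm.nodup_iff.2 hcyc
  simp only [cycleColors, chordColors, List.nodup_cons, List.mem_cons, List.not_mem_nil, or_false,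
    not_or, not_false_eq_true, List.nodup_nil, and_true, phi_comm hae.symm, phi_comm had.symm,
    phi_comm hbe.symm] at hcyc hchord hopp₂ hopp₃ hopp₅
  rintro ⟨p, hp, q, hq, rfl, hpq, h₁, h₂, h₃, h₄⟩
  simp only [edgeList, List.mem_cons, List.not_mem_nil, or_false] at hp hq
  rcases hp with rfl | rfl | rfl | rfl | rfl | rfl | rfl | rfl | rfl | rfl <;>
    rcases hq with rfl | rfl | rfl | rfl | rfl | rfl | rfl | rfl | rfl | rfl <;>
    simp_all

end Matching

theorem no_rainbow_cycle_plus_matching_general (m : ℕ) :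
    ¬ ∃ a b c d e : Vtx m, IsConfig22222 a b c d e ∧
      (phi a b ≠ phi b c ∧ phi a b ≠ phi c d ∧ phi a b ≠ phi d e ∧ phi a b ≠ phi e a ∧
       phi b c ≠ phi c d ∧ phi b c ≠ phi d e ∧ phi b c ≠ phi e a ∧
       phi c d ≠ phi d e ∧ phi c d ≠ phi e a ∧ phi d e ≠ phi e a) ∧
      ∃ col : Color m, IsMatchingClass a b c d e col := by
  rintro ⟨a, b, c, d, e, hcfg, hrainbow, col, hcol⟩
  have hcyc : (cycleColors a b c d e).Nodup := by
    simp only [cycleColors, List.nodup_cons, List.mem_cons, List.not_mem_nil, or_false, not_or,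
      not_false_eq_true, List.nodup_nil, and_true]
    tauto
  exact (hcfg.isRainbowPentagon hcyc).not_isMatchingClass hcfg.1 col hcol

/-- No 2-2-2-2-2 configuration under `φ` contains a rainbow 5-cycle together with at
least one matching color class. -/
theorem no_rainbow_cycle_plus_matching (m : ℕ) (hm : 0 < m) :
    ¬ ∃ a b c d e : Vtx m, IsConfig22222 a b c d e ∧
      (phi a b ≠ phi b c ∧ phi a b ≠ phi c d ∧ phi a b ≠ phi d e ∧ phi a b ≠ phi e a ∧
       phi b c ≠ phi c d ∧ phi b c ≠ phi d e ∧ phi b c ≠ phi e a ∧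
       phi c d ≠ phi d e ∧ phi c d ≠ phi e a ∧ phi d e ≠ phi e a) ∧
      ∃ col : Color m, IsMatchingClass a b c d e col :=
  no_rainbow_cycle_plus_matching_general m

end CFLS
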